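/- With φ_T as defined (φ_T(M₁,M₂,n) = -∑_{d squarefree, d>1, prime factors ≤ n} μ(d)·⌊((M₁ mod d)+(M₂ mod d))/d⌋), for every natural number n ≥ 2: φ_T(n², 2n, n) = π(2n) - π(n) + 1 - (π(n²+2n) - π(n²)). -/

import Mathlib

open ArithmeticFunction Nat Finset

/-- Index set: squarefree `d > 1` all of whose prime factors are `≤ n`. -/
def sqfSet (n : ℕ) : Finset ℕ :=
  (Finset.range (primorial n + 1)).filter
    (fun d => 1 < d ∧ Squarefree d ∧ ∀ p ∈ d.primeFactors, p ≤ n)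

/-- The transformed Legendre function `φ_T`. -/
def phiT (M₁ M₂ n : ℕ) : ℤ :=
  -∑ d ∈ sqfSet n, ArithmeticFunction.moebius d * (((M₁ % d + M₂ % d) / d : ℕ) : ℤ)

/-!
For `P = n#`, Legendre's identity `∑_{d ∣ P} μ(d) ⌊x/d⌋ = #{m ≤ x : gcd(m, P) = 1}` together with
`⌊(a mod d + b mod d)/d⌋ = ⌊(a + b)/d⌋ - ⌊a/d⌋ - ⌊b/d⌋` turns `φ_T(M₁, M₂, n)` into
`φ(M₁, n) + φ(M₂, n) - φ(M₁ + M₂, n)`, where `φ` is Legendre's function (the `d = 1` term carries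
nothing). For `n ≤ x < (n + 1)²` an integer in `[1, x]` without prime factors `≤ n` is `1` or a
prime in `(n, x]`, so `φ(x, n) = 1 + π(x) - π(n)`; this applies to `x = n², 2n, n² + 2n`.
-/

open scoped ArithmeticFunction.Moebius Nat.Prime

lemma dvd_primorial_iff {d n : ℕ} :
    d ∣ primorial n ↔ Squarefree d ∧ ∀ p ∈ d.primeFactors, p ≤ n := by
  refine ⟨fun h ↦ ⟨(squarefree_primorial n).squarefree_of_dvd h, fun p hp ↦ ?_⟩,
    fun ⟨hsq, hle⟩ ↦ ?_⟩
  · have := primeFactors_mono h (primorial_ne_zero n) hp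
    rw [primeFactors_primorial] at this
    exact le_of_mem_primesLE this
  · rw [← prod_primeFactors_of_squarefree hsq, primorial_eq_prod_primesLE]
    exact prod_dvd_prod_of_subset _ _ _ fun p hp ↦
      mem_primesLE.2 ⟨hle p hp, prime_of_mem_primeFactors hp⟩

lemma sqfSet_eq_erase_divisors (n : ℕ) : sqfSet n = (primorial n).divisors.erase 1 := by
  ext d
  simp only [sqfSet, mem_filter, mem_range, mem_erase, mem_divisors, ← dvd_primorial_iff]
  constructor
  · rintro ⟨-, h1, hd⟩
    exact ⟨h1.ne', hd, primorial_ne_zero n⟩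
  · rintro ⟨h1, hd, -⟩
    have hd0 : d ≠ 0 := by rintro rfl; simp [primorial_ne_zero] at hd
    exact ⟨lt_succ_of_le (le_of_dvd (primorial_pos n) hd), by omega, hd⟩

lemma sum_divisors_moebius (m : ℕ) : ∑ d ∈ m.divisors, (μ d : ℤ) = if m = 1 then 1 else 0 := by
  rw [← coe_mul_zeta_apply, moebius_mul_coe_zeta, one_apply]

lemma sum_divisors_moebius_mul_div {P : ℕ} (hP : P ≠ 0) (x : ℕ) :
    ∑ d ∈ P.divisors, (μ d : ℤ) * (x / d : ℕ) = #{m ∈ Ioc 0 x | m.Coprime P} := by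
  have hcount (d : ℕ) : ((x / d : ℕ) : ℤ) = ∑ m ∈ Ioc 0 x, if d ∣ m then 1 else 0 := by
    rw [← Ioc_filter_dvd_card_eq_div x d, sum_boole]
  have hgcd (m : ℕ) : {d ∈ P.divisors | d ∣ m} = (m.gcd P).divisors := by
    ext d
    have := gcd_ne_zero_right (m := m) hP
    simp only [mem_filter, mem_divisors, dvd_gcd_iff]
    tauto
  simp_rw [hcount, mul_sum, mul_boole]
  rw [sum_comm]
  simp_rw [← sum_filter, hgcd, sum_divisors_moebius, Nat.Coprime, sum_boole]

def legendrePhi (x n : ℕ) : ℕ := #{m ∈ Ioc 0 x | m.Coprime (primorial n)}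

lemma add_div_eq_div_add_div_add_mod_div (a b : ℕ) {d : ℕ} (hd : 0 < d) :
    (a + b) / d = a / d + b / d + (a % d + b % d) / d := by
  conv_lhs => rw [← div_add_mod a d, ← div_add_mod b d]
  rw [show d * (a / d) + a % d + (d * (b / d) + b % d) = a % d + b % d + d * (a / d + b / d) by
    ring, add_mul_div_left _ _ hd]
  ring

lemma phiT_eq_legendrePhi (M₁ M₂ n : ℕ) :
    phiT M₁ M₂ n = legendrePhi M₁ n + legendrePhi M₂ n - legendrePhi (M₁ + M₂) n := by
  have hcarry : ∀ d ∈ (primorial n).divisors, (μ d : ℤ) * ((M₁ % d + M₂ % d) / d : ℕ) =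
      μ d * ((M₁ + M₂) / d : ℕ) - μ d * (M₁ / d : ℕ) - μ d * (M₂ / d : ℕ) := by
    intro d hd
    rw [add_div_eq_div_add_div_add_mod_div M₁ M₂ (pos_of_mem_divisors hd)]
    push_cast
    ring
  rw [phiT, sqfSet_eq_erase_divisors, sum_erase _ (by simp), sum_congr rfl hcarry,
    sum_sub_distrib, sum_sub_distrib]
  simp only [sum_divisors_moebius_mul_div (primorial_ne_zero n), legendrePhi]
  ring

lemma coprime_primorial_iff {m n : ℕ} :
    m.Coprime (primorial n) ↔ ∀ p, p.Prime → p ∣ m → n < p := by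
  rw [primorial_eq_prod_primesLE, coprime_prod_right_iff]
  refine ⟨fun h p hp hpm ↦ ?_, fun h p hp ↦ ?_⟩
  · by_contra! hpn
    exact (hp.coprime_iff_not_dvd.1 (h p (mem_primesLE.2 ⟨hpn, hp⟩)).symm) hpm
  · obtain ⟨hpn, hp⟩ := mem_primesLE.1 hp
    exact (hp.coprime_iff_not_dvd.2 fun hpm ↦ (h p hp hpm).not_ge hpn).symm

lemma prime_of_coprime_primorial {m n : ℕ} (hm : 1 < m) (hmn : m < (n + 1) ^ 2)
    (hcop : m.Coprime (primorial n)) : m.Prime := by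
  have hp := minFac_prime hm.ne'
  have hnp : n < m.minFac := coprime_primorial_iff.1 hcop _ hp (minFac_dvd m)
  by_contra hm'
  have := minFac_sq_le_self (by omega) hm'
  have : (n + 1) ^ 2 ≤ m.minFac ^ 2 := Nat.pow_le_pow_left hnp 2
  omega

lemma filter_coprime_primorial_eq {n x : ℕ} (hx : 0 < x) (hxn : x < (n + 1) ^ 2) :
    {m ∈ Ioc 0 x | m.Coprime (primorial n)} = insert 1 {p ∈ Ioc n x | p.Prime} := by
  ext m
  simp only [mem_filter, mem_Ioc, mem_insert]
  constructor
  · rintro ⟨⟨hm0, hmx⟩, hcop⟩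
    rcases (show m = 1 ∨ 1 < m by omega) with rfl | hm1
    · exact .inl rfl
    have hp := prime_of_coprime_primorial hm1 (hmx.trans_lt hxn) hcop
    exact .inr ⟨⟨coprime_primorial_iff.1 hcop m hp dvd_rfl, hmx⟩, hp⟩
  · rintro (rfl | ⟨⟨hnm, hmx⟩, hp⟩)
    · exact ⟨⟨one_pos, hx⟩, coprime_one_left _⟩
    · refine ⟨⟨hp.pos, hmx⟩, coprime_primorial_iff.2 fun q hq hqm ↦ ?_⟩
      rwa [(prime_dvd_prime_iff_eq hq hp).1 hqm]

lemma card_filter_prime_Ioc {n x : ℕ} (h : n ≤ x) : #{p ∈ Ioc n x | p.Prime} + π n = π x := by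
  rw [← primesLE_card_eq_primeCounting, ← primesLE_card_eq_primeCounting,
    primesLE_eq_filter_Ioc_zero, primesLE_eq_filter_Ioc_zero, ← Ioc_union_Ioc_eq_Ioc (zero_le n) h,
    filter_union, card_union_of_disjoint (disjoint_filter_filter (Ioc_disjoint_Ioc_of_le le_rfl)),
    add_comm]

lemma legendrePhi_eq_of_lt_sq {n x : ℕ} (hn : 0 < n) (hnx : n ≤ x) (hxn : x < (n + 1) ^ 2) :
    (legendrePhi x n : ℤ) = 1 + π x - π n := by
  rw [legendrePhi, filter_coprime_primorial_eq (by omega) hxn,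
    card_insert_of_notMem (by simp [Nat.not_prime_one]), ← card_filter_prime_Ioc hnx]
  push_cast
  ring

theorem stmt_11 (n : ℕ) (hn : 2 ≤ n) :
    phiT (n ^ 2) (2 * n) n =
      (Nat.primeCounting (2 * n) : ℤ) - Nat.primeCounting n + 1 -
        ((Nat.primeCounting (n ^ 2 + 2 * n) : ℤ) - Nat.primeCounting (n ^ 2)) := by
  rw [phiT_eq_legendrePhi, legendrePhi_eq_of_lt_sq (by omega) (by nlinarith) (by nlinarith),
    legendrePhi_eq_of_lt_sq (by omega) (by omega) (by nlinarith),
    legendrePhi_eq_of_lt_sq (by omega) (by nlinarith) (by nlinarith)]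
  ring
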